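/- Let H be an F_5^t-free 3-uniform hypergraph on vertex set [n]. Suppose x, x' are vertices with codegree d(x,x') ≥ t+1, and S ⊆ [n]. Then d_{S,S}(x) + d_{S,S}(x') ≤ |S|^2/2 + (t+4)·n, where d_{S,S}(v) is the number of pairs {y,z} ⊆ S with {v,y,z} a hyperedge. -/

import Mathlib

/-!
Fix `t + 1` common neighbours `V` of `x` and `x'`. If a pair `{y, z}` avoids `x`, `x'` and `V`
and both `{x, y, z}` and `{x', y, z}` are edges, then `y, z, x, x'` together with `V` span a
copy of `F_5^t`. So the pairs of `S` counted twice lie among the at most `(t + 3)·|S|` pairs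
meeting `{x, x'} ∪ V`, and `d_{S,S}(x) + d_{S,S}(x') ≤ C(|S|, 2) + (t + 3)·n`.
-/

open Finset

variable {α : Type*} [DecidableEq α]

namespace Finset

theorem ne_of_card_triple_eq_three {a b c : α} (h : #{a, b, c} = 3) :
    a ≠ b ∧ a ≠ c ∧ b ≠ c := by
  refine ⟨?_, ?_, ?_⟩ <;> rintro rfl <;>
    simp only [mem_singleton, insert_eq_of_mem, mem_insert, true_or, or_true] at h <;>
    exact absurd h (card_le_two.trans_lt (by norm_num)).ne

theorem card_filter_add_card_filter_le_card_add {s : Finset α} {p q r : α → Prop}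
    [DecidablePred p] [DecidablePred q] [DecidablePred r]
    (h : ∀ a ∈ s, p a → q a → r a) :
    #(s.filter p) + #(s.filter q) ≤ #s + #(s.filter r) := by
  rw [← card_union_add_card_inter, ← filter_or, ← filter_and]
  exact add_le_add (card_le_card (filter_subset _ _))
    (card_le_card (monotone_filter_right _ fun a ha hpq => h a ha hpq.1 hpq.2))

theorem card_filter_mem_powersetCard_two_le (s : Finset α) (u : α) :
    #((s.powersetCard 2).filter (u ∈ ·)) ≤ #s := by
  refine (card_le_card fun p hp => ?_).trans (card_image_le (f := fun w => ({u, w} : Finset α)))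
  obtain ⟨hps, hpu⟩ := mem_filter.mp hp
  obtain ⟨hps, hp2⟩ := mem_powersetCard.mp hps
  obtain ⟨a, b, -, rfl⟩ := card_eq_two.mp hp2
  rcases mem_insert.mp hpu with rfl | hub
  · exact mem_image.mpr ⟨b, hps (by simp), rfl⟩
  · rw [mem_singleton.mp hub]
    exact mem_image.mpr ⟨a, hps (by simp), pair_comm _ _⟩

theorem card_filter_not_disjoint_powersetCard_two_le (s t : Finset α) :
    #((s.powersetCard 2).filter (¬ Disjoint · t)) ≤ #t * #s := by
  calc #((s.powersetCard 2).filter (¬ Disjoint · t))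
      ≤ #(t.biUnion fun u => (s.powersetCard 2).filter (u ∈ ·)) := by
        refine card_le_card fun p hp => ?_
        obtain ⟨hps, hpt⟩ := mem_filter.mp hp
        obtain ⟨u, hup, hut⟩ := not_disjoint_iff.mp hpt
        exact mem_biUnion.mpr ⟨u, hut, mem_filter.mpr ⟨hps, hup⟩⟩
    _ ≤ ∑ u ∈ t, #((s.powersetCard 2).filter (u ∈ ·)) := card_biUnion_le
    _ ≤ #t * #s := sum_le_card_nsmul _ _ _ fun u _ => card_filter_mem_powersetCard_two_le s u

end Finset

/-- `a, b, c, d` play the roles of `1, 2, 3, 4` in `F_5^t`, and `v` those of `5, …, 5 + t`. -/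
def F5tFree (t : ℕ) (H : Finset (Finset α)) : Prop :=
  ¬ ∃ (a b c d : α) (v : Fin (t + 1) → α),
      ({a, b, c, d} : Finset α).card = 4 ∧
      Function.Injective v ∧
      (∀ i, v i ∉ ({a, b, c, d} : Finset α)) ∧
      ({a, b, c} : Finset α) ∈ H ∧ ({a, b, d} : Finset α) ∈ H ∧
      (∀ i, ({c, d, v i} : Finset α) ∈ H)

theorem F5tFree.not_disjoint_of_insert_mem {t : ℕ} {H : Finset (Finset α)} (hfree : F5tFree t H)
    {x x' : α} {V p : Finset α} (hV : #V = t + 1) (hVH : ∀ v ∈ V, {x, x', v} ∈ H)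
    (hxx' : x ≠ x') (hxV : x ∉ V) (hx'V : x' ∉ V) (hp : #p = 2)
    (hxp : insert x p ∈ H) (hx'p : insert x' p ∈ H) :
    ¬ Disjoint p (insert x (insert x' V)) := by
  obtain ⟨y, z, hyz, rfl⟩ := card_eq_two.mp hp
  intro hdisj
  simp only [disjoint_insert_left, disjoint_singleton_left, mem_insert, not_or] at hdisj
  obtain ⟨⟨hyx, hyx', hyV⟩, hzx, hzx', hzV⟩ := hdisj
  let e := (V.equivFinOfCardEq hV).symm
  refine hfree ⟨y, z, x, x', fun i => e i, ?_, fun i j h => e.injective (Subtype.ext h),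
    fun i => ?_, ?_, ?_, fun i => hVH _ (e i).2⟩
  · rw [card_insert_of_notMem (by simp [hyz, hyx, hyx']),
      card_insert_of_notMem (by simp [hzx, hzx']), card_pair hxx']
  · have hi : (e i : α) ∈ V := (e i).2
    simp only [mem_insert, mem_singleton, not_or]
    exact ⟨ne_of_mem_of_not_mem hi hyV, ne_of_mem_of_not_mem hi hzV,
      ne_of_mem_of_not_mem hi hxV, ne_of_mem_of_not_mem hi hx'V⟩
  · rwa [pair_comm, insert_comm]
  · rwa [pair_comm, insert_comm]

/-- In an `F_5^t`-free 3-graph, if `d(x,x') ≥ t+1` and `S ⊆ [n]`,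
then `d_{S,S}(x) + d_{S,S}(x') ≤ |S|^2/2 + (t+4)·n`, where `d_{S,S}(v)` counts
pairs `{y,z} ⊆ S` with `{v,y,z}` a hyperedge. -/
theorem stmt5 (n t : ℕ) (H : Finset (Finset (Fin n)))
    (h3 : ∀ e ∈ H, e.card = 3)
    (hfree : ¬ ∃ (a b c d : Fin n) (v : Fin (t + 1) → Fin n),
      ({a, b, c, d} : Finset (Fin n)).card = 4 ∧
      Function.Injective v ∧
      (∀ i, v i ∉ ({a, b, c, d} : Finset (Fin n))) ∧
      ({a, b, c} : Finset (Fin n)) ∈ H ∧ ({a, b, d} : Finset (Fin n)) ∈ H ∧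
      (∀ i, ({c, d, v i} : Finset (Fin n)) ∈ H))
    (x x' : Fin n)
    (hcod : t + 1 ≤ (Finset.univ.filter
      (fun v => ({x, x', v} : Finset (Fin n)) ∈ H)).card)
    (S : Finset (Fin n)) :
    (((S.powersetCard 2).filter (fun p => insert x p ∈ H)).card : ℝ)
      + (((S.powersetCard 2).filter (fun p => insert x' p ∈ H)).card : ℝ)
      ≤ (S.card : ℝ) ^ 2 / 2 + ((t : ℝ) + 4) * n := by
  obtain ⟨V, hVsub, hV⟩ := exists_subset_card_eq hcod
  have hVH : ∀ v ∈ V, ({x, x', v} : Finset (Fin n)) ∈ H :=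
    fun v hv => (mem_filter.mp (hVsub hv)).2
  have hdist : ∀ v ∈ V, x ≠ x' ∧ x ≠ v ∧ x' ≠ v :=
    fun v hv => ne_of_card_triple_eq_three (h3 _ (hVH v hv))
  obtain ⟨v₀, hv₀⟩ : V.Nonempty := card_pos.mp (by omega)
  have hxV : x ∉ V := fun hx => (hdist x hx).2.1 rfl
  have hx'V : x' ∉ V := fun hx' => (hdist x' hx').2.2 rfl
  set T := insert x (insert x' V)
  have hcount := card_filter_add_card_filter_le_card_add (s := S.powersetCard 2)
    (r := (¬ Disjoint · T)) fun p hp hxp hx'p =>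
    F5tFree.not_disjoint_of_insert_mem hfree hV hVH (hdist v₀ hv₀).1 hxV hx'V
      (mem_powersetCard.mp hp).2 hxp hx'p
  have hT : #T ≤ t + 3 := (card_insert_le _ _).trans (by have := card_insert_le x' V; omega)
  have hS : #S ≤ n := by simpa using card_le_univ S
  rw [card_powersetCard] at hcount
  have hnat := hcount.trans <| Nat.add_le_add_left
    ((card_filter_not_disjoint_powersetCard_two_le S T).trans (Nat.mul_le_mul hT hS)) _
  have hreal := (Nat.cast_le (α := ℝ)).mpr hnat
  have hchoose : ((#S).choose 2 : ℝ) ≤ (#S : ℝ) ^ 2 / 2 := by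
    simpa using Nat.choose_le_pow_div (α := ℝ) 2 #S
  push_cast at hreal
  linarith [(Nat.cast_nonneg n : (0 : ℝ) ≤ n)]
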